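/- arXiv:1401.0882 — 5 statements merged into one kernel-verified Lean document; each statement's English description precedes it below -/
import Mathlib

section
/- There exists a Steinitz-Rademacher polyhedron of cardinality 6. -/
/-! The digonal dihedron: two vertices, two edges each joining both vertices, and two faces each
bounded by both edges. Every element is incident with every element of a different rank, so each
of the counting axioms asks for the two elements of one rank, and there are exactly two. -/

/-- A Steinitz-Rademacher polyhedron structure on a type `P` with
vertex/edge/face predicates `V`, `E`, `F` and incidence relation `I`. -/
structure IsSR {P : Type*} (V E F : P → Prop) (I : P → P → Prop) : Prop where
  exV : ∃ x, V x
  exE : ∃ x, E x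
  exF : ∃ x, F x
  cover : ∀ x, V x ∨ E x ∨ F x
  symm : ∀ x y, I x y → I y x
  noVV : ∀ x y, V x → V y → ¬ I x y
  noEE : ∀ x y, E x → E y → ¬ I x y
  noFF : ∀ x y, F x → F y → ¬ I x y
  trans : ∀ v e f, V v → E e → F f → I v e → I e f → I v f
  edgeV : ∀ e, E e → ∃ v₁ v₂, v₁ ≠ v₂ ∧ V v₁ ∧ V v₂ ∧ I e v₁ ∧ I e v₂ ∧
    ∀ v, V v → I e v → v = v₁ ∨ v = v₂
  edgeF : ∀ e, E e → ∃ f₁ f₂, f₁ ≠ f₂ ∧ F f₁ ∧ F f₂ ∧ I e f₁ ∧ I e f₂ ∧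
    ∀ f, F f → I e f → f = f₁ ∨ f = f₂
  vfE : ∀ v f, V v → F f → I v f → ∃ e₁ e₂, e₁ ≠ e₂ ∧ E e₁ ∧ E e₂ ∧
    I v e₁ ∧ I e₁ f ∧ I v e₂ ∧ I e₂ f ∧
    ∀ e, E e → I v e → I e f → e = e₁ ∨ e = e₂
  vInc : ∀ v, V v → ∃ x, x ≠ v ∧ I v x
  fInc : ∀ f, F f → ∃ x, x ≠ f ∧ I f x

set_option synthInstance.maxSize 1024 in
theorem isSR_digonalDihedron :
    IsSR (fun x : Fin 3 × Bool => x.1 = 0) (fun x => x.1 = 1) (fun x => x.1 = 2)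
      (fun x y => x.1 ≠ y.1) := by
  constructor <;> decide

theorem sr_card_six_exists :
    ∃ (P : Type) (V E F : P → Prop) (I : P → P → Prop),
      IsSR V E F I ∧ Nat.card P = 6 :=
  ⟨Fin 3 × Bool, _, _, _, _, isSR_digonalDihedron, by simp⟩
end

section
/- There is no Steinitz-Rademacher polyhedron of cardinality at most 5. -/
namespace IsSR

variable {P : Type*} {V E F : P → Prop} {I : P → P → Prop}

theorem disjoint_vertices_edges (h : IsSR V E F I) : Disjoint {x | V x} {x | E x} := by
  refine Set.disjoint_right.mpr fun x hE hV => ?_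
  obtain ⟨v, -, -, hv, -, hxv, -⟩ := h.edgeV x hE
  exact h.noVV x v hV hv hxv

theorem disjoint_edges_faces (h : IsSR V E F I) : Disjoint {x | E x} {x | F x} := by
  refine Set.disjoint_left.mpr fun x hE hF => ?_
  obtain ⟨f, -, -, hf, -, hxf, -⟩ := h.edgeF x hE
  exact h.noFF x f hF hf hxf

theorem disjoint_vertices_faces (h : IsSR V E F I) : Disjoint {x | V x} {x | F x} := by
  refine Set.disjoint_left.mpr fun x hV hF => ?_
  obtain ⟨y, -, hxy⟩ := h.vInc x hV
  rcases h.cover y with hy | hy | hy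
  · exact h.noVV x y hV hy hxy
  · exact h.noVV x x hV hV (h.trans x y x hV hy hF hxy (h.symm _ _ hxy))
  · exact h.noFF x y hF hy hxy

theorem exists_incident_vertex_face (h : IsSR V E F I) : ∃ v f, V v ∧ F f ∧ I v f := by
  obtain ⟨e, he⟩ := h.exE
  obtain ⟨v, -, -, hv, -, hev, -⟩ := h.edgeV e he
  obtain ⟨f, -, -, hf, -, hef, -⟩ := h.edgeF e he
  exact ⟨v, f, hv, hf, h.trans v e f hv he hf (h.symm _ _ hev) hef⟩

variable [Finite P]

theorem one_lt_ncard_vertices (h : IsSR V E F I) : 1 < {x | V x}.ncard := by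
  obtain ⟨e, he⟩ := h.exE
  obtain ⟨v₁, v₂, hne, hv₁, hv₂, -⟩ := h.edgeV e he
  exact (Set.one_lt_ncard).mpr ⟨v₁, hv₁, v₂, hv₂, hne⟩

theorem one_lt_ncard_faces (h : IsSR V E F I) : 1 < {x | F x}.ncard := by
  obtain ⟨e, he⟩ := h.exE
  obtain ⟨f₁, f₂, hne, hf₁, hf₂, -⟩ := h.edgeF e he
  exact (Set.one_lt_ncard).mpr ⟨f₁, hf₁, f₂, hf₂, hne⟩

theorem one_lt_ncard_edges (h : IsSR V E F I) : 1 < {x | E x}.ncard := by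
  obtain ⟨v, f, hv, hf, hvf⟩ := h.exists_incident_vertex_face
  obtain ⟨e₁, e₂, hne, he₁, he₂, -⟩ := h.vfE v f hv hf hvf
  exact (Set.one_lt_ncard).mpr ⟨e₁, he₁, e₂, he₂, hne⟩

theorem six_le_natCard (h : IsSR V E F I) : 6 ≤ Nat.card P :=
  calc 6 ≤ {x | V x}.ncard + {x | E x}.ncard + {x | F x}.ncard := by
        have := h.one_lt_ncard_vertices
        have := h.one_lt_ncard_edges
        have := h.one_lt_ncard_faces
        omega
    _ = ({x | V x} ∪ {x | E x} ∪ {x | F x}).ncard := by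
        rw [Set.ncard_union_eq (h.disjoint_vertices_faces.union_left h.disjoint_edges_faces),
          Set.ncard_union_eq h.disjoint_vertices_edges]
    _ ≤ Nat.card P := Set.ncard_le_card _

end IsSR

theorem no_sr_card_le_five (P : Type) (V E F : P → Prop) (I : P → P → Prop)
    (h : IsSR V E F I) (hfin : Finite P) (hcard : Nat.card P ≤ 5) : False := by
  have := h.six_le_natCard
  omega
end

section
/- Any two Steinitz-Rademacher polyhedra of cardinality 6 are isomorphic (as structures preserving V, E, F, and I). -/
theorem forall_of_card_eq_two {α : Type*} (hα : Nat.card α = 2) {p : α → Prop} {x y : α}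
    (hxy : x ≠ y) (hx : p x) (hy : p y) (z : α) : p z := by
  obtain ⟨w, -, hw⟩ := (Nat.card_eq_two_iff' x).1 hα
  by_cases hzx : z = x
  · exact hzx ▸ hx
  · rwa [hw z hzx, ← hw y hxy.symm]

open Classical in
noncomputable def srSort {P : Type*} (V E : P → Prop) (x : P) : Fin 3 :=
  if V x then 0 else if E x then 1 else 2

theorem srSort_eq_zero_iff {P : Type*} {V E : P → Prop} {x : P} : srSort V E x = 0 ↔ V x := by
  unfold srSort
  split_ifs <;> simp_all

namespace IsSR

variable {P : Type*} {V E F : P → Prop} {I : P → P → Prop}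

theorem not_vertex_of_edge (h : IsSR V E F I) {x : P} (he : E x) : ¬ V x := fun hv => by
  obtain ⟨v, -, -, hv', -, hxv, -⟩ := h.edgeV x he
  exact h.noVV x v hv hv' hxv

theorem not_face_of_edge (h : IsSR V E F I) {x : P} (he : E x) : ¬ F x := fun hf => by
  obtain ⟨f, -, -, hf', -, hxf, -⟩ := h.edgeF x he
  exact h.noFF x f hf hf' hxf

theorem not_vertex_of_face (h : IsSR V E F I) {x : P} (hf : F x) : ¬ V x := fun hv => by
  obtain ⟨y, -, hxy⟩ := h.vInc x hv
  rcases h.cover y with hy | hy | hy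
  · exact h.noVV x y hv hy hxy
  · exact h.noVV x x hv hv (h.trans x y x hv hy hf hxy (h.symm x y hxy))
  · exact h.noFF x y hf hy hxy

theorem srSort_eq_one_iff (h : IsSR V E F I) {x : P} : srSort V E x = 1 ↔ E x := by
  unfold srSort
  split_ifs with hv he
  · exact iff_of_false (by decide) fun he => h.not_vertex_of_edge he hv
  · exact iff_of_true rfl he
  · exact iff_of_false (by decide) he

theorem srSort_eq_two_iff (h : IsSR V E F I) {x : P} : srSort V E x = 2 ↔ F x := by
  unfold srSort
  split_ifs with hv he
  · exact iff_of_false (by decide) fun hf => h.not_vertex_of_face hf hv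
  · exact iff_of_false (by decide) (h.not_face_of_edge he)
  · exact iff_of_true rfl (((h.cover x).resolve_left hv).resolve_left he)

theorem exists_pair_ne_srSort_eq (h : IsSR V E F I) (c : Fin 3) :
    ∃ x y, x ≠ y ∧ srSort V E x = c ∧ srSort V E y = c := by
  obtain ⟨e, he⟩ := h.exE
  obtain ⟨v₁, v₂, hv, hv₁, hv₂, hev₁, -, -⟩ := h.edgeV e he
  obtain ⟨f₁, f₂, hf, hf₁, hf₂, hef₁, -, -⟩ := h.edgeF e he
  fin_cases c
  · exact ⟨v₁, v₂, hv, srSort_eq_zero_iff.2 hv₁, srSort_eq_zero_iff.2 hv₂⟩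
  · have hv₁f₁ : I v₁ f₁ := h.trans v₁ e f₁ hv₁ he hf₁ (h.symm _ _ hev₁) hef₁
    obtain ⟨e₁, e₂, he₁₂, he₁, he₂, -⟩ := h.vfE v₁ f₁ hv₁ hf₁ hv₁f₁
    exact ⟨e₁, e₂, he₁₂, h.srSort_eq_one_iff.2 he₁, h.srSort_eq_one_iff.2 he₂⟩
  · exact ⟨f₁, f₂, hf, h.srSort_eq_two_iff.2 hf₁, h.srSort_eq_two_iff.2 hf₂⟩

theorem one_lt_card_srSort_fiber [Finite P] (h : IsSR V E F I) (c : Fin 3) :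
    1 < Nat.card {x // srSort V E x = c} := by
  obtain ⟨x, y, hxy, hx, hy⟩ := h.exists_pair_ne_srSort_eq c
  exact Finite.one_lt_card_iff_nontrivial.2
    (nontrivial_of_ne ⟨x, hx⟩ ⟨y, hy⟩ (Subtype.coe_ne_coe.1 hxy))

theorem card_srSort_fiber_eq_two (h : IsSR V E F I) (hc : Nat.card P = 6) (c : Fin 3) :
    Nat.card {x // srSort V E x = c} = 2 := by
  have : Finite P := Nat.finite_of_card_ne_zero (by omega)
  have hsum : ∑ d, Nat.card {x // srSort V E x = d} = 6 := by
    rw [← Nat.card_sigma, Nat.card_congr (Equiv.sigmaFiberEquiv _), hc]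
  rw [Fin.sum_univ_three] at hsum
  have h₀ := h.one_lt_card_srSort_fiber 0
  have h₁ := h.one_lt_card_srSort_fiber 1
  have h₂ := h.one_lt_card_srSort_fiber 2
  fin_cases c <;> simp only [Fin.zero_eta, Fin.mk_one, Fin.reduceFinMk] <;> omega

theorem card_vertex_eq_two (h : IsSR V E F I) (hc : Nat.card P = 6) :
    Nat.card {x // V x} = 2 :=
  (Nat.card_congr (Equiv.subtypeEquivRight fun _ => srSort_eq_zero_iff)).symm.trans
    (h.card_srSort_fiber_eq_two hc 0)

theorem card_face_eq_two (h : IsSR V E F I) (hc : Nat.card P = 6) :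
    Nat.card {x // F x} = 2 :=
  (Nat.card_congr (Equiv.subtypeEquivRight fun _ => h.srSort_eq_two_iff)).symm.trans
    (h.card_srSort_fiber_eq_two hc 2)

theorem incident_edge_vertex (h : IsSR V E F I) (hV : Nat.card {x // V x} = 2) {e v : P}
    (he : E e) (hv : V v) : I e v := by
  obtain ⟨v₁, v₂, hv₁₂, hv₁, hv₂, hev₁, hev₂, -⟩ := h.edgeV e he
  exact forall_of_card_eq_two hV (p := fun w : {x // V x} => I e w)
    (x := ⟨v₁, hv₁⟩) (y := ⟨v₂, hv₂⟩) (Subtype.coe_ne_coe.1 hv₁₂) hev₁ hev₂ ⟨v, hv⟩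

theorem incident_edge_face (h : IsSR V E F I) (hF : Nat.card {x // F x} = 2) {e f : P}
    (he : E e) (hf : F f) : I e f := by
  obtain ⟨f₁, f₂, hf₁₂, hf₁, hf₂, hef₁, hef₂, -⟩ := h.edgeF e he
  exact forall_of_card_eq_two hF (p := fun w : {x // F x} => I e w)
    (x := ⟨f₁, hf₁⟩) (y := ⟨f₂, hf₂⟩) (Subtype.coe_ne_coe.1 hf₁₂) hef₁ hef₂ ⟨f, hf⟩

theorem incident_iff_srSort_ne (h : IsSR V E F I) (hV : Nat.card {x // V x} = 2)
    (hF : Nat.card {x // F x} = 2) {x y : P} : I x y ↔ srSort V E x ≠ srSort V E y := by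
  obtain ⟨e₀, he₀⟩ := h.exE
  have hEV {e v : P} : E e → V v → I e v := h.incident_edge_vertex hV
  have hEF {e f : P} : E e → F f → I e f := h.incident_edge_face hF
  have hVF {v f : P} (hv : V v) (hf : F f) : I v f :=
    h.trans v e₀ f hv he₀ hf (h.symm _ _ (hEV he₀ hv)) (hEF he₀ hf)
  rcases h.cover x with hx | hx | hx <;> rcases h.cover y with hy | hy | hy <;>
    simp only [srSort_eq_zero_iff.2, h.srSort_eq_one_iff.2, h.srSort_eq_two_iff.2, hx, hy]
  · exact iff_of_false (h.noVV x y hx hy) (by decide)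
  · exact iff_of_true (h.symm _ _ (hEV hy hx)) (by decide)
  · exact iff_of_true (hVF hx hy) (by decide)
  · exact iff_of_true (hEV hx hy) (by decide)
  · exact iff_of_false (h.noEE x y hx hy) (by decide)
  · exact iff_of_true (hEF hx hy) (by decide)
  · exact iff_of_true (h.symm _ _ (hVF hy hx)) (by decide)
  · exact iff_of_true (h.symm _ _ (hEF hy hx)) (by decide)
  · exact iff_of_false (h.noFF x y hx hy) (by decide)

end IsSR

theorem sr_card_six_categorical (P Q : Type)
    (V E F : P → Prop) (I : P → P → Prop)
    (V' E' F' : Q → Prop) (I' : Q → Q → Prop)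
    (hP : IsSR V E F I) (hQ : IsSR V' E' F' I')
    (hcP : Nat.card P = 6) (hcQ : Nat.card Q = 6) :
    ∃ g : P ≃ Q, (∀ x, V' (g x) ↔ V x) ∧ (∀ x, E' (g x) ↔ E x) ∧
      (∀ x, F' (g x) ↔ F x) ∧ (∀ x y, I' (g x) (g y) ↔ I x y) := by
  have : Finite P := Nat.finite_of_card_ne_zero (by omega)
  have : Finite Q := Nat.finite_of_card_ne_zero (by omega)
  let g : P ≃ Q := Equiv.ofFiberEquiv fun c =>
    (Finite.equivFinOfCardEq (hP.card_srSort_fiber_eq_two hcP c)).trans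
      (Finite.equivFinOfCardEq (hQ.card_srSort_fiber_eq_two hcQ c)).symm
  have hg (x : P) : srSort V' E' (g x) = srSort V E x := Equiv.ofFiberEquiv_map _ x
  refine ⟨g, fun x => ?_, fun x => ?_, fun x => ?_, fun x y => ?_⟩
  · rw [← srSort_eq_zero_iff (V := V') (E := E'), hg, srSort_eq_zero_iff]
  · rw [← hQ.srSort_eq_one_iff, hg, hP.srSort_eq_one_iff]
  · rw [← hQ.srSort_eq_two_iff, hg, hP.srSort_eq_two_iff]
  · rw [hQ.incident_iff_srSort_ne (hQ.card_vertex_eq_two hcQ) (hQ.card_face_eq_two hcQ), hg, hg,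
      hP.incident_iff_srSort_ne (hP.card_vertex_eq_two hcP) (hP.card_face_eq_two hcP)]
end

section
/- There exists a Steinitz-Rademacher polyhedron of cardinality 8 with exactly 2 vertices, 3 edges, and 3 faces. -/
theorem Fin.self_ne_add_one {n : ℕ} [NeZero n] (hn : 2 ≤ n) (k : Fin n) : k ≠ k + 1 := by
  rw [ne_eq, left_eq_add, Fin.ext_iff, Fin.val_one', Fin.val_zero, Nat.mod_eq_of_lt hn]
  exact one_ne_zero

namespace Hosohedron

variable (n : ℕ)

abbrev Cell := Fin 2 ⊕ Fin n ⊕ Fin n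

variable {n}

def IsVertex : Cell n → Prop
  | .inl _ => True
  | .inr _ => False

def IsEdge : Cell n → Prop
  | .inr (.inl _) => True
  | _ => False

def IsFace : Cell n → Prop
  | .inr (.inr _) => True
  | _ => False

/-- Lune `k` is the digon between meridians `k` and `k + 1`. -/
def Incident [NeZero n] : Cell n → Cell n → Prop
  | .inl _, .inr _ | .inr _, .inl _ => True
  | .inr (.inl e), .inr (.inr f) | .inr (.inr f), .inr (.inl e) => e = f ∨ e = f + 1
  | _, _ => False

theorem isSR [NeZero n] (hn : 2 ≤ n) : IsSR (@IsVertex n) IsEdge IsFace Incident := by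
  have hne := Fin.self_ne_add_one hn
  refine ⟨⟨.inl 0, trivial⟩, ⟨.inr (.inl 0), trivial⟩, ⟨.inr (.inr 0), trivial⟩,
    ?_, ?_, ?_, ?_, ?_, ?_, ?_, ?_, ?_, ?_, ?_⟩
  · rintro (_ | _ | _) <;> simp [IsVertex, IsEdge, IsFace]
  · rintro (_ | _ | _) (_ | _ | _) <;> simp [Incident, eq_comm]
  · rintro (_ | _ | _) (_ | _ | _) <;> simp [Incident, IsVertex]
  · rintro (_ | _ | _) (_ | _ | _) <;> simp [Incident, IsEdge]
  · rintro (_ | _ | _) (_ | _ | _) <;> simp [Incident, IsFace]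
  · rintro (_ | _ | _) (_ | _ | _) (_ | _ | _) <;> simp [Incident, IsVertex, IsEdge, IsFace]
  · rintro (_ | e | _) he <;> simp only [IsEdge] at he
    refine ⟨.inl 0, .inl 1, by simp, trivial, trivial, trivial, trivial, ?_⟩
    rintro (v | _) _ _
    · fin_cases v <;> simp
    · contradiction
  · rintro (_ | e | _) he <;> simp only [IsEdge] at he
    refine ⟨.inr (.inr e), .inr (.inr (e - 1)), by simpa using (hne (e - 1)).symm, trivial,
      trivial, by simp [Incident], by simp [Incident], ?_⟩
    rintro (_ | _ | f) hf hef <;> simp only [IsFace] at hf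
    simp only [Incident] at hef
    rcases hef with rfl | rfl <;> simp
  · rintro (_ | _ | _) (_ | _ | f) hv hf - <;> simp only [IsVertex, IsFace] at hv hf
    refine ⟨.inr (.inl f), .inr (.inl (f + 1)), by simpa using hne f, trivial, trivial, trivial,
      by simp [Incident], trivial, by simp [Incident], ?_⟩
    rintro (_ | e | _) he - hef <;> simp only [IsEdge] at he
    simpa [Incident] using hef
  · rintro (_ | _) hv
    · exact ⟨.inr (.inl 0), by simp, trivial⟩
    · contradiction
  · rintro (_ | _ | f) hf <;> simp only [IsFace] at hf
    exact ⟨.inl 0, by simp, trivial⟩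

theorem card_cell : Nat.card (Cell n) = 2 + n + n := by simp [add_assoc]

theorem card_vertex : Nat.card {x : Cell n // IsVertex x} = 2 := by
  classical
  rw [Nat.card_eq_fintype_card, Fintype.card_subtype, Finset.card_filter]
  simp [IsVertex]

theorem card_edge : Nat.card {x : Cell n // IsEdge x} = n := by
  classical
  rw [Nat.card_eq_fintype_card, Fintype.card_subtype, Finset.card_filter]
  simp [IsEdge]

theorem card_face : Nat.card {x : Cell n // IsFace x} = n := by
  classical
  rw [Nat.card_eq_fintype_card, Fintype.card_subtype, Finset.card_filter]
  simp [IsFace]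

end Hosohedron

theorem sr_card_eight_exists :
    ∃ (P : Type) (V E F : P → Prop) (I : P → P → Prop),
      IsSR V E F I ∧ Nat.card P = 8 ∧
      Nat.card {x // V x} = 2 ∧ Nat.card {x // E x} = 3 ∧
      Nat.card {x // F x} = 3 :=
  ⟨Hosohedron.Cell 3, _, _, _, _, Hosohedron.isSR (by norm_num), Hosohedron.card_cell,
    Hosohedron.card_vertex, Hosohedron.card_edge, Hosohedron.card_face⟩
end

section
/- For every n ≥ 3 there exists a Steinitz-Rademacher polyhedron of cardinality 4n + 2; consequently there is no largest finite Steinitz-Rademacher polyhedron. -/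
inductive Pyramid (n : ℕ) : Type
  | baseVertex (i : ZMod n)
  | apex
  | baseEdge (i : ZMod n)
  | lateralEdge (i : ZMod n)
  | lateralFace (i : ZMod n)
  | base

namespace Pyramid

variable {n : ℕ}

@[simp]
def rank : Pyramid n → ℕ
  | baseVertex _ | apex => 0
  | baseEdge _ | lateralEdge _ => 1
  | lateralFace _ | base => 2

/-- Base edge `j` joins base vertices `j` and `j + 1`, lateral edge `j` joins base vertex `j` to
the apex, and lateral face `j` is the triangle spanned by the apex and base edge `j`. -/
@[simp]
def LiesOn : Pyramid n → Pyramid n → Prop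
  | baseVertex i, baseEdge j => i = j ∨ i = j + 1
  | baseVertex i, lateralEdge j => i = j
  | baseVertex i, lateralFace j => i = j ∨ i = j + 1
  | baseVertex _, base => True
  | apex, lateralEdge _ => True
  | apex, lateralFace _ => True
  | baseEdge i, lateralFace j => i = j
  | baseEdge _, base => True
  | lateralEdge i, lateralFace j => i = j ∨ i = j + 1
  | _, _ => False

def Incident (x y : Pyramid n) : Prop := LiesOn x y ∨ LiesOn y x

theorem rank_lt_of_liesOn {x y : Pyramid n} (h : LiesOn x y) : x.rank < y.rank := by
  cases x <;> cases y <;> simp_all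

theorem liesOn_trans {x y z : Pyramid n} (hxy : LiesOn x y) (hyz : LiesOn y z) : LiesOn x z := by
  cases x <;> cases y <;> cases z <;> simp_all

theorem Incident.rank_ne {x y : Pyramid n} (h : Incident x y) : x.rank ≠ y.rank :=
  h.elim (fun h => (rank_lt_of_liesOn h).ne) (fun h => (rank_lt_of_liesOn h).ne')

theorem Incident.liesOn {x y : Pyramid n} (h : Incident x y) (hr : x.rank < y.rank) :
    LiesOn x y :=
  h.resolve_right fun h' => (rank_lt_of_liesOn h').not_gt hr

def equivSum : Pyramid n ≃ (ZMod n ⊕ ZMod n ⊕ ZMod n ⊕ ZMod n) ⊕ Bool where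
  toFun
    | baseVertex i => .inl (.inl i)
    | baseEdge i => .inl (.inr (.inl i))
    | lateralEdge i => .inl (.inr (.inr (.inl i)))
    | lateralFace i => .inl (.inr (.inr (.inr i)))
    | apex => .inr true
    | base => .inr false
  invFun
    | .inl (.inl i) => baseVertex i
    | .inl (.inr (.inl i)) => baseEdge i
    | .inl (.inr (.inr (.inl i))) => lateralEdge i
    | .inl (.inr (.inr (.inr i))) => lateralFace i
    | .inr true => apex
    | .inr false => base
  left_inv x := by cases x <;> rfl
  right_inv x := by rcases x with (_ | _ | _ | _) | _ | _ <;> rfl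

instance [NeZero n] : Finite (Pyramid n) := .of_equiv _ equivSum.symm

theorem natCard_eq [NeZero n] : Nat.card (Pyramid n) = 4 * n + 2 := by
  rw [Nat.card_congr equivSum, Nat.card_eq_fintype_card]
  simp only [Fintype.card_sum, ZMod.card, Fintype.card_bool]
  ring

variable [Fact (1 < n)]

theorem exists_two_incident_vertices (e : Pyramid n) (he : e.rank = 1) :
    ∃ v₁ v₂, v₁ ≠ v₂ ∧ v₁.rank = 0 ∧ v₂.rank = 0 ∧ Incident e v₁ ∧ Incident e v₂ ∧
      ∀ v : Pyramid n, v.rank = 0 → Incident e v → v = v₁ ∨ v = v₂ := by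
  cases e <;> cases he
  case' baseEdge j => refine ⟨baseVertex j, baseVertex (j + 1), ?_⟩
  case' lateralEdge j => refine ⟨baseVertex j, apex, ?_⟩
  all_goals
    simp only [Incident]
    refine ⟨by simp, rfl, rfl, by simp, by simp, ?_⟩
    rintro (_|_|_|_|_|_) <;> simp

theorem exists_two_incident_faces (e : Pyramid n) (he : e.rank = 1) :
    ∃ f₁ f₂, f₁ ≠ f₂ ∧ f₁.rank = 2 ∧ f₂.rank = 2 ∧ Incident e f₁ ∧ Incident e f₂ ∧
      ∀ f : Pyramid n, f.rank = 2 → Incident e f → f = f₁ ∨ f = f₂ := by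
  cases e <;> cases he
  case' baseEdge j => refine ⟨lateralFace j, base, ?_⟩
  case' lateralEdge j => refine ⟨lateralFace j, lateralFace (j - 1), ?_⟩
  all_goals
    simp only [Incident]
    refine ⟨by simp [eq_sub_iff_add_eq], rfl, rfl, by simp, by simp [eq_sub_iff_add_eq], ?_⟩
    rintro (_|_|_|_|_|_) <;> simp
    all_goals grind

theorem exists_two_edges_between (v f : Pyramid n) (hv : v.rank = 0) (hf : f.rank = 2)
    (hvf : Incident v f) :
    ∃ e₁ e₂, e₁ ≠ e₂ ∧ e₁.rank = 1 ∧ e₂.rank = 1 ∧ Incident v e₁ ∧ Incident e₁ f ∧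
      Incident v e₂ ∧ Incident e₂ f ∧
      ∀ e : Pyramid n, e.rank = 1 → Incident v e → Incident e f → e = e₁ ∨ e = e₂ := by
  replace hvf := hvf.liesOn (by omega)
  cases v <;> cases f <;> cases hv <;> cases hf <;> simp only [LiesOn] at hvf
  case' baseVertex.lateralFace i j => refine ⟨baseEdge j, lateralEdge i, ?_⟩
  case' baseVertex.base i => refine ⟨baseEdge i, baseEdge (i - 1), ?_⟩
  case' apex.lateralFace j => refine ⟨lateralEdge j, lateralEdge (j + 1), ?_⟩
  all_goals
    simp only [Incident]
    refine ⟨by simp [eq_sub_iff_add_eq], rfl, rfl, by simp_all, by simp_all,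
      by simp_all [eq_sub_iff_add_eq], by simp_all, ?_⟩
    rintro (_|_|_|_|_|_) <;> simp
    all_goals grind

theorem isSR : IsSR (rank · = 0) (rank · = 1) (rank · = 2) (Incident (n := n)) where
  exV := ⟨apex, rfl⟩
  exE := ⟨lateralEdge 0, rfl⟩
  exF := ⟨base, rfl⟩
  cover x := by cases x <;> simp
  symm _ _ := Or.symm
  noVV _ _ hx hy h := h.rank_ne (hx.trans hy.symm)
  noEE _ _ hx hy h := h.rank_ne (hx.trans hy.symm)
  noFF _ _ hx hy h := h.rank_ne (hx.trans hy.symm)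
  trans _ _ _ hv he hf hve hef :=
    .inl (liesOn_trans (hve.liesOn (by omega)) (hef.liesOn (by omega)))
  edgeV := exists_two_incident_vertices
  edgeF := exists_two_incident_faces
  vfE := exists_two_edges_between
  vInc v hv := by
    rcases v with i | _ | _ | _ | _ | _ <;> cases hv
    exacts [⟨baseEdge i, by simp [Incident]⟩, ⟨lateralEdge 0, by simp [Incident]⟩]
  fInc f hf := by
    rcases f with _ | _ | _ | _ | j | _ <;> cases hf
    exacts [⟨baseEdge j, by simp [Incident]⟩, ⟨baseEdge 0, by simp [Incident]⟩]

end Pyramid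

theorem sr_pyramids_no_largest :
    (∀ n : ℕ, 3 ≤ n → ∃ (P : Type) (V E F : P → Prop) (I : P → P → Prop),
      IsSR V E F I ∧ Nat.card P = 4 * n + 2) ∧
    ∀ m : ℕ, ∃ (P : Type) (V E F : P → Prop) (I : P → P → Prop),
      IsSR V E F I ∧ Finite P ∧ m < Nat.card P := by
  refine ⟨fun n hn => ?_, fun m => ?_⟩
  · have : Fact (1 < n) := ⟨by omega⟩
    exact ⟨Pyramid n, _, _, _, _, Pyramid.isSR, Pyramid.natCard_eq⟩
  · have : Fact (1 < m + 2) := ⟨by omega⟩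
    refine ⟨Pyramid (m + 2), _, _, _, _, Pyramid.isSR, inferInstance, ?_⟩
    rw [Pyramid.natCard_eq]
    omega
end
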